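/- arXiv:2101.05489 — 2 statements merged into one kernel-verified Lean document; each statement's English description precedes it below -/
import Mathlib

section
/- For every T₀ > 0 and every δ > 0, there exists a C¹ curve (x,ξ) : [0,T₀] → ℝ³ × ℝ³ which solves Hamilton's equations ẋ(t) = ∇_ξ H(x(t),ξ(t)), ξ̇(t) = −∇ₓ H(x(t),ξ(t)) for the Heisenberg Hamiltonian H, such that H(x(t),ξ(t)) = 1/4 for all t ∈ [0,T₀], the curve t ↦ x(t) is non-constant, x(0) = 0, and |x(t)| < δ for every t ∈ [0,T₀]. (This is Proposition 2.1 of the paper, specialized to the flat 3D Heisenberg structure: there exist non-stationary normal geodesics traveled at speed 1 which remain in an arbitrarily small neighborhood of the origin for an arbitrarily long time.) -/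
open Real Set

noncomputable section

/-- **spiraling normal geodesics of the Heisenberg
Hamiltonian.** For the flat 3D Heisenberg Hamiltonian
`H(x,ξ) = ξ₁² + (ξ₂ - x₁ξ₃)²`, for every `T₀ > 0` and `δ > 0` there is a C¹
solution of Hamilton's equations (written componentwise), with
`H ≡ 1/4` on `[0,T₀]`, non-constant projection `x`, `x(0) = 0`, and
`|x(t)| < δ` for all `t ∈ [0,T₀]`. -/
theorem statement_11 (T₀ δ : ℝ) (hT₀ : 0 < T₀) (hδ : 0 < δ) :
    ∃ x₁ x₂ x₃ ξ₁ ξ₂ ξ₃ : ℝ → ℝ,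
      (∀ t ∈ Icc (0 : ℝ) T₀,
        HasDerivAt x₁ (2 * ξ₁ t) t ∧
        HasDerivAt x₂ (2 * (ξ₂ t - x₁ t * ξ₃ t)) t ∧
        HasDerivAt x₃ (-2 * x₁ t * (ξ₂ t - x₁ t * ξ₃ t)) t ∧
        HasDerivAt ξ₁ (2 * ξ₃ t * (ξ₂ t - x₁ t * ξ₃ t)) t ∧
        HasDerivAt ξ₂ 0 t ∧ HasDerivAt ξ₃ 0 t) ∧
      (∀ t ∈ Icc (0 : ℝ) T₀,
        ξ₁ t ^ 2 + (ξ₂ t - x₁ t * ξ₃ t) ^ 2 = 1 / 4) ∧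
      (∃ t₁ ∈ Icc (0 : ℝ) T₀, ∃ t₂ ∈ Icc (0 : ℝ) T₀,
        (x₁ t₁, x₂ t₁, x₃ t₁) ≠ (x₁ t₂, x₂ t₂, x₃ t₂)) ∧
      (x₁ 0 = 0 ∧ x₂ 0 = 0 ∧ x₃ 0 = 0) ∧
      (∀ t ∈ Icc (0 : ℝ) T₀,
        Real.sqrt (x₁ t ^ 2 + x₂ t ^ 2 + x₃ t ^ 2) < δ) := by
  obtain ⟨ω, hω_def⟩ : ∃ ω : ℝ, ω = 1 + (5 + (T₀ + 1) ^ 2) / δ ^ 2 := ⟨_, rfl⟩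
  have hδ2 : 0 < δ ^ 2 := by positivity
  have hω1 : (1 : ℝ) ≤ ω := by
    have h : 0 ≤ (5 + (T₀ + 1) ^ 2) / δ ^ 2 := by positivity
    rw [hω_def]
    linarith
  have hω : 0 < ω := lt_of_lt_of_le one_pos hω1
  have hωne : ω ≠ 0 := ne_of_gt hω
  refine ⟨fun t => Real.sin (ω * t) / ω,
    fun t => (Real.cos (ω * t) - 1) / ω,
    fun t => t / (2 * ω) - Real.sin (2 * (ω * t)) / (4 * ω ^ 2),
    fun t => Real.cos (ω * t) / 2,
    fun _ => 0, fun _ => ω / 2, ?_, ?_, ?_, ?_, ?_⟩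
  · intro t _
    have hlin : HasDerivAt (fun s : ℝ => ω * s) ω t := by
      simpa using (hasDerivAt_id t).const_mul ω
    have hsin : HasDerivAt (fun s => Real.sin (ω * s)) (Real.cos (ω * t) * ω) t :=
      (Real.hasDerivAt_sin (ω * t)).comp t hlin
    have hcos : HasDerivAt (fun s => Real.cos (ω * s)) (-Real.sin (ω * t) * ω) t :=
      (Real.hasDerivAt_cos (ω * t)).comp t hlin
    have hlin2 : HasDerivAt (fun s : ℝ => 2 * (ω * s)) (2 * ω) t := by
      simpa [mul_assoc] using (hasDerivAt_id t).const_mul (2 * ω)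
    have hsin2 : HasDerivAt (fun s => Real.sin (2 * (ω * s)))
        (Real.cos (2 * (ω * t)) * (2 * ω)) t :=
      hlin2.sin
    refine ⟨?_, ?_, ?_, ?_, hasDerivAt_const t 0, hasDerivAt_const t (ω / 2)⟩
    · have := hsin.div_const ω
      refine this.congr_deriv ?_; symm
      field_simp
    · have := (hcos.sub_const 1).div_const ω
      refine this.congr_deriv ?_; symm
      field_simp
      ring
    · have h1 : HasDerivAt (fun s : ℝ => s / (2 * ω)) (1 / (2 * ω)) t := by
        simpa using (hasDerivAt_id t).div_const (2 * ω)
      have := h1.sub (hsin2.div_const (4 * ω ^ 2))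
      refine this.congr_deriv ?_; symm
      rw [Real.cos_two_mul']
      field_simp
      linear_combination 4 * Real.sin_sq_add_cos_sq (ω * t)
    · have := hcos.div_const 2
      refine this.congr_deriv ?_; symm
      field_simp
      ring
  · intro t _
    have h := Real.sin_sq_add_cos_sq (ω * t)
    field_simp
    nlinarith [h]
  · refine ⟨0, ⟨le_refl 0, le_of_lt hT₀⟩, min T₀ (π / (2 * ω)), ⟨?_, min_le_left _ _⟩, ?_⟩
    · have : 0 < π / (2 * ω) := by positivity
      exact le_of_lt (lt_min hT₀ this)
    · have htpos : 0 < min T₀ (π / (2 * ω)) := lt_min hT₀ (by positivity)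
      have harg : 0 < ω * min T₀ (π / (2 * ω)) := by positivity
      have harg2 : ω * min T₀ (π / (2 * ω)) < π := by
        have h1 : ω * min T₀ (π / (2 * ω)) ≤ ω * (π / (2 * ω)) :=
          mul_le_mul_of_nonneg_left (min_le_right _ _) (le_of_lt hω)
        have h2 : ω * (π / (2 * ω)) = π / 2 := by field_simp
        have : π / 2 < π := by linarith [Real.pi_pos]
        linarith [h1, h2 ▸ h1]
      have hsinpos : 0 < Real.sin (ω * min T₀ (π / (2 * ω))) :=
        Real.sin_pos_of_pos_of_lt_pi harg harg2
      intro hcontra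
      have := congrArg Prod.fst hcontra
      simp only at this
      rw [mul_zero, Real.sin_zero, zero_div] at this
      have : Real.sin (ω * min T₀ (π / (2 * ω))) / ω = 0 := this.symm
      have := (div_eq_zero_iff.mp this).resolve_right hωne
      linarith
  · refine ⟨by simp, by simp, by simp⟩
  · intro t ht
    obtain ⟨ht0, htT⟩ := ht
    rw [Real.sqrt_lt' hδ]
    have hs1 : |Real.sin (ω * t)| ≤ 1 := Real.abs_sin_le_one _
    have hc1 : |Real.cos (ω * t) - 1| ≤ 2 := by
      have := Real.abs_cos_le_one (ω * t)
      rw [abs_le] at this ⊢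
      constructor <;> linarith [this.1, this.2]
    have hs2 : |Real.sin (2 * (ω * t))| ≤ 1 := Real.abs_sin_le_one _
    have hb1 : (Real.sin (ω * t) / ω) ^ 2 ≤ 1 / ω ^ 2 := by
      rw [div_pow]
      apply div_le_div_of_nonneg_right _ (by positivity)
      nlinarith [abs_nonneg (Real.sin (ω * t)), sq_abs (Real.sin (ω * t))]
    have hb2 : ((Real.cos (ω * t) - 1) / ω) ^ 2 ≤ 4 / ω ^ 2 := by
      rw [div_pow]
      apply div_le_div_of_nonneg_right _ (by positivity)
      nlinarith [abs_nonneg (Real.cos (ω * t) - 1), sq_abs (Real.cos (ω * t) - 1)]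
    have hb3 : (t / (2 * ω) - Real.sin (2 * (ω * t)) / (4 * ω ^ 2)) ^ 2
        ≤ (T₀ + 1) ^ 2 / ω ^ 2 := by
      have habs : |t / (2 * ω) - Real.sin (2 * (ω * t)) / (4 * ω ^ 2)| ≤ (T₀ + 1) / ω := by
        calc |t / (2 * ω) - Real.sin (2 * (ω * t)) / (4 * ω ^ 2)|
            ≤ |t / (2 * ω)| + |Real.sin (2 * (ω * t)) / (4 * ω ^ 2)| := abs_sub _ _
          _ ≤ T₀ / (2 * ω) + 1 / (4 * ω ^ 2) := by
              gcongr
              · rw [abs_div, abs_of_nonneg ht0, abs_of_pos (by positivity : (0:ℝ) < 2 * ω)]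
                exact div_le_div_of_nonneg_right htT (by positivity)
              · rw [abs_div, abs_of_pos (by positivity : (0:ℝ) < 4 * ω ^ 2)]
                exact div_le_div_of_nonneg_right hs2 (by positivity)
          _ ≤ (T₀ + 1) / ω := by
              have e1 : T₀ / (2 * ω) ≤ T₀ / ω := by
                apply div_le_div_of_nonneg_left hT₀.le hω
                linarith
              have e2 : 1 / (4 * ω ^ 2) ≤ 1 / ω := by
                apply div_le_div_of_nonneg_left one_pos.le hω
                nlinarith
              have e3 : (T₀ + 1) / ω = T₀ / ω + 1 / ω := by ring
              linarith
      calc (t / (2 * ω) - Real.sin (2 * (ω * t)) / (4 * ω ^ 2)) ^ 2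
          = |t / (2 * ω) - Real.sin (2 * (ω * t)) / (4 * ω ^ 2)| ^ 2 := (sq_abs _).symm
        _ ≤ ((T₀ + 1) / ω) ^ 2 := by
            apply pow_le_pow_left₀ (abs_nonneg _) habs
        _ = (T₀ + 1) ^ 2 / ω ^ 2 := by rw [div_pow]
    have hsum : (Real.sin (ω * t) / ω) ^ 2 + ((Real.cos (ω * t) - 1) / ω) ^ 2
        + (t / (2 * ω) - Real.sin (2 * (ω * t)) / (4 * ω ^ 2)) ^ 2
        ≤ (5 + (T₀ + 1) ^ 2) / ω ^ 2 := by
      have : (1 : ℝ) / ω ^ 2 + 4 / ω ^ 2 + (T₀ + 1) ^ 2 / ω ^ 2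
          = (5 + (T₀ + 1) ^ 2) / ω ^ 2 := by ring
      linarith
    have hωbig : (5 + (T₀ + 1) ^ 2) / ω ^ 2 < δ ^ 2 := by
      have hω2 : ω ≤ ω ^ 2 := by nlinarith
      have h1 : (5 + (T₀ + 1) ^ 2) / ω ^ 2 ≤ (5 + (T₀ + 1) ^ 2) / ω := by
        apply div_le_div_of_nonneg_left (by positivity) hω hω2
      have h2 : (5 + (T₀ + 1) ^ 2) / ω < δ ^ 2 := by
        rw [div_lt_iff₀ hω, hω_def]
        have : (5 + (T₀ + 1) ^ 2) / δ ^ 2 * δ ^ 2 = 5 + (T₀ + 1) ^ 2 := by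
          field_simp
        nlinarith [this, hδ2]
      linarith
    linarith
end
end

section
/- Let T₀ > 0 and ε ∈ (0,1]. Define x_ε(t) = ( ε sin(t/ε), ε cos(t/ε) − ε, ε(t/2 − ε sin(2t/ε)/4) ) and ξ_ε(t) = ( cos(t/ε)/2, 0, 1/(2ε) ). Then for all t ∈ ℝ the curve (x_ε,ξ_ε) solves Hamilton's equations ẋ = ∇_ξ H(x,ξ), ξ̇ = −∇ₓ H(x,ξ) for the Heisenberg Hamiltonian H; moreover H(x_ε(t),ξ_ε(t)) = 1/4 for all t, and for every t ∈ [0,T₀] each coordinate of x_ε(t) has absolute value at most (2+T₀)ε. -/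
open Real Set

noncomputable section

/-- `x_ε(t) = (ε sin(t/ε), ε cos(t/ε) - ε, ε(t/2 - ε sin(2t/ε)/4))`. -/
def xe1 (ε t : ℝ) : ℝ := ε * Real.sin (t / ε)
def xe2 (ε t : ℝ) : ℝ := ε * Real.cos (t / ε) - ε
def xe3 (ε t : ℝ) : ℝ := ε * (t / 2 - ε * Real.sin (2 * t / ε) / 4)

/-- `ξ_ε(t) = (cos(t/ε)/2, 0, 1/(2ε))`. -/
def xi1 (ε t : ℝ) : ℝ := Real.cos (t / ε) / 2
def xi2 (ε t : ℝ) : ℝ := 0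
def xi3 (ε t : ℝ) : ℝ := 1 / (2 * ε)

/-
The curve is a circle of radius `ε` in `(x₁, x₂)` run at angular speed `1/ε`; the
equation for `x₃` reads `ẋ₃ = ε sin²(t/ε)`, which the half-angle formula integrates. Along the curve `ξ₂ - x₁ξ₃ = -sin(t/ε)/2`, so `H = (cos² + sin²)/4`.
For the bounds, `x₁` and `x₂` are uniformly `O(ε)`, while `x₃` grows like `εt/2`.
-/

namespace SpiralingGeodesic

variable {ε : ℝ}

theorem xi2_sub_xe1_mul_xi3 (hε : ε ≠ 0) (t : ℝ) :
    xi2 ε t - xe1 ε t * xi3 ε t = -Real.sin (t / ε) / 2 := by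
  simp only [xi2, xe1, xi3]
  field_simp
  ring

theorem hasDerivAt_div_const_sin (ε t : ℝ) :
    HasDerivAt (fun s => Real.sin (s / ε)) (Real.cos (t / ε) / ε) t := by
  simpa [div_eq_mul_inv] using ((hasDerivAt_id t).div_const ε).sin

theorem hasDerivAt_div_const_cos (ε t : ℝ) :
    HasDerivAt (fun s => Real.cos (s / ε)) (-Real.sin (t / ε) / ε) t := by
  simpa [div_eq_mul_inv] using ((hasDerivAt_id t).div_const ε).cos

theorem hasDerivAt_xe1 (hε : ε ≠ 0) (t : ℝ) : HasDerivAt (xe1 ε) (2 * xi1 ε t) t := by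
  refine ((hasDerivAt_div_const_sin ε t).const_mul ε).congr_deriv ?_
  simp only [xi1]
  field_simp

theorem hasDerivAt_xe2 (hε : ε ≠ 0) (t : ℝ) :
    HasDerivAt (xe2 ε) (2 * (xi2 ε t - xe1 ε t * xi3 ε t)) t := by
  refine (((hasDerivAt_div_const_cos ε t).const_mul ε).sub_const ε).congr_deriv ?_
  rw [xi2_sub_xe1_mul_xi3 hε]
  field_simp

theorem hasDerivAt_xe3 (hε : ε ≠ 0) (t : ℝ) :
    HasDerivAt (xe3 ε) (-2 * xe1 ε t * (xi2 ε t - xe1 ε t * xi3 ε t)) t := by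
  have hsin : HasDerivAt (fun s => Real.sin (2 * s / ε)) (Real.cos (2 * t / ε) * (2 / ε)) t := by
    simpa [mul_div_assoc] using (((hasDerivAt_id t).const_mul 2).div_const ε).sin
  refine ((((hasDerivAt_id t).div_const 2).sub ((hsin.const_mul ε).div_const 4)).const_mul
    ε).congr_deriv ?_
  have hcos : Real.cos (2 * t / ε) = 1 - 2 * Real.sin (t / ε) ^ 2 := by
    rw [mul_div_assoc, Real.cos_two_mul, Real.cos_sq']
    ring
  rw [xi2_sub_xe1_mul_xi3 hε, hcos, xe1]
  field_simp
  ring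

theorem hasDerivAt_xi1 (hε : ε ≠ 0) (t : ℝ) :
    HasDerivAt (xi1 ε) (2 * xi3 ε t * (xi2 ε t - xe1 ε t * xi3 ε t)) t := by
  refine ((hasDerivAt_div_const_cos ε t).div_const 2).congr_deriv ?_
  rw [xi2_sub_xe1_mul_xi3 hε, xi3]
  field_simp

theorem hasDerivAt_xi2 (t : ℝ) : HasDerivAt (xi2 ε) 0 t :=
  hasDerivAt_const t 0

theorem hasDerivAt_xi3 (t : ℝ) : HasDerivAt (xi3 ε) 0 t :=
  hasDerivAt_const t _

theorem xi1_sq_add_sq_eq_quarter (hε : ε ≠ 0) (t : ℝ) :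
    xi1 ε t ^ 2 + (xi2 ε t - xe1 ε t * xi3 ε t) ^ 2 = 1 / 4 := by
  rw [xi2_sub_xe1_mul_xi3 hε, xi1]
  linear_combination Real.cos_sq_add_sin_sq (t / ε) / 4

theorem abs_xe1_le (ε t : ℝ) : |xe1 ε t| ≤ |ε| := by
  rw [xe1, abs_mul]
  exact mul_le_of_le_one_right (abs_nonneg ε) (Real.abs_sin_le_one _)

theorem abs_xe2_le (ε t : ℝ) : |xe2 ε t| ≤ 2 * |ε| := by
  have hcos : |Real.cos (t / ε) - 1| ≤ 2 := by
    rw [abs_le]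
    constructor <;> linarith [Real.neg_one_le_cos (t / ε), Real.cos_le_one (t / ε)]
  rw [xe2, ← mul_sub_one, abs_mul, mul_comm 2]
  exact mul_le_mul_of_nonneg_left hcos (abs_nonneg ε)

theorem abs_xe3_le (ε t : ℝ) : |xe3 ε t| ≤ |ε| * (|t| / 2 + |ε| / 4) := by
  have hsin : |ε * Real.sin (2 * t / ε) / 4| ≤ |ε| / 4 := by
    rw [abs_div, abs_mul, abs_of_pos (four_pos : (0 : ℝ) < 4)]
    gcongr
    exact mul_le_of_le_one_right (abs_nonneg ε) (Real.abs_sin_le_one _)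
  rw [xe3, abs_mul]
  gcongr
  calc |t / 2 - ε * Real.sin (2 * t / ε) / 4|
      ≤ |t / 2| + |ε * Real.sin (2 * t / ε) / 4| := abs_sub _ _
    _ ≤ |t| / 2 + |ε| / 4 := by rw [abs_div, abs_two]; gcongr

end SpiralingGeodesic

open SpiralingGeodesic in
theorem statement_12_general (T₀ ε : ℝ) (hε : ε ∈ Ioc (0 : ℝ) 1) :
    (∀ t : ℝ,
      HasDerivAt (xe1 ε) (2 * xi1 ε t) t ∧
      HasDerivAt (xe2 ε) (2 * (xi2 ε t - xe1 ε t * xi3 ε t)) t ∧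
      HasDerivAt (xe3 ε) (-2 * xe1 ε t * (xi2 ε t - xe1 ε t * xi3 ε t)) t ∧
      HasDerivAt (xi1 ε) (2 * xi3 ε t * (xi2 ε t - xe1 ε t * xi3 ε t)) t ∧
      HasDerivAt (xi2 ε) 0 t ∧ HasDerivAt (xi3 ε) 0 t) ∧
    (∀ t : ℝ, xi1 ε t ^ 2 + (xi2 ε t - xe1 ε t * xi3 ε t) ^ 2 = 1 / 4) ∧
    (∀ t ∈ Icc (0 : ℝ) T₀,
      |xe1 ε t| ≤ (2 + T₀) * ε ∧ |xe2 ε t| ≤ (2 + T₀) * ε ∧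
        |xe3 ε t| ≤ (2 + T₀) * ε) := by
  obtain ⟨hε0, hε1⟩ := hε
  have hε : ε ≠ 0 := hε0.ne'
  refine ⟨fun t => ⟨hasDerivAt_xe1 hε t, hasDerivAt_xe2 hε t, hasDerivAt_xe3 hε t,
    hasDerivAt_xi1 hε t, hasDerivAt_xi2 t, hasDerivAt_xi3 t⟩,
    xi1_sq_add_sq_eq_quarter hε, fun t ⟨ht0, htT⟩ => ?_⟩
  have h1 := abs_xe1_le ε t
  have h2 := abs_xe2_le ε t
  have h3 := abs_xe3_le ε t
  rw [abs_of_pos hε0] at h1 h2 h3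
  rw [abs_of_nonneg ht0] at h3
  refine ⟨?_, ?_, ?_⟩ <;> nlinarith

/-- **explicit spiraling geodesics.** For `0 < ε ≤ 1`, the
explicit curves `(x_ε, ξ_ε)` solve Hamilton's equations for the flat 3D
Heisenberg Hamiltonian `H(x,ξ) = ξ₁² + (ξ₂ - x₁ξ₃)²`, satisfy `H ≡ 1/4`, and
each coordinate of `x_ε(t)` is bounded by `(2 + T₀)ε` for `t ∈ [0,T₀]`. -/
theorem statement_12 (T₀ ε : ℝ) (hT₀ : 0 < T₀) (hε : ε ∈ Ioc (0 : ℝ) 1) :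
    (∀ t : ℝ,
      HasDerivAt (xe1 ε) (2 * xi1 ε t) t ∧
      HasDerivAt (xe2 ε) (2 * (xi2 ε t - xe1 ε t * xi3 ε t)) t ∧
      HasDerivAt (xe3 ε) (-2 * xe1 ε t * (xi2 ε t - xe1 ε t * xi3 ε t)) t ∧
      HasDerivAt (xi1 ε) (2 * xi3 ε t * (xi2 ε t - xe1 ε t * xi3 ε t)) t ∧
      HasDerivAt (xi2 ε) 0 t ∧ HasDerivAt (xi3 ε) 0 t) ∧
    (∀ t : ℝ, xi1 ε t ^ 2 + (xi2 ε t - xe1 ε t * xi3 ε t) ^ 2 = 1 / 4) ∧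
    (∀ t ∈ Icc (0 : ℝ) T₀,
      |xe1 ε t| ≤ (2 + T₀) * ε ∧ |xe2 ε t| ≤ (2 + T₀) * ε ∧
        |xe3 ε t| ≤ (2 + T₀) * ε) :=
  statement_12_general T₀ ε hε
end
end
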